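/- In a DAG, disjoint vertex sets A and B are d-separated by S if and only if A and B are separated by S in the moral graph of the ancestral subgraph generated by A ∪ B ∪ S. -/

import Mathlib

/-- Skeleton (undirected) adjacency of a directed graph. -/
def Skel {V : Type*} (E : V → V → Prop) (a b : V) : Prop := E a b ∨ E b a

/-- Directed reachability: `Reaches E a b` iff there is a directed path from `a` to `b`. -/
def Reaches {V : Type*} (E : V → V → Prop) : V → V → Prop := Relation.ReflTransGen E

/-- A directed graph is acyclic if no edge can be completed to a directed cycle. -/
def IsAcyclicD {V : Type*} (E : V → V → Prop) : Prop := ∀ a b : V, E a b → ¬ Reaches E b a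

/-- `(a, b, c)` is an immorality (v-structure): `a → b ← c` with `a, c` non-adjacent. -/
def Immorality {V : Type*} (E : V → V → Prop) (a b c : V) : Prop :=
  a ≠ c ∧ E a b ∧ E c b ∧ ¬ Skel E a c

/-- `p` is an (undirected) trail from `a` to `b` in the skeleton of `E`. -/
def IsTrail {V : Type*} (E : V → V → Prop) (a b : V) (p : List V) : Prop :=
  p.Chain' (Skel E) ∧ p.head? = some a ∧ p.getLast? = some b ∧ p.Nodup ∧ 2 ≤ p.length

/-- A consecutive triple `x - y - z` on a trail is blocked by `S`:
a collider `x → y ← z` blocks unless `y` has a descendant (possibly itself) in `S`;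
a non-collider blocks iff `y ∈ S`. -/
def BlockedTriple {V : Type*} (E : V → V → Prop) (S : Set V) (x y z : V) : Prop :=
  ((E x y ∧ E z y) ∧ ∀ d ∈ S, ¬ Reaches E y d) ∨ (¬ (E x y ∧ E z y) ∧ y ∈ S)

/-- A trail is blocked by `S` if some consecutive triple on it is blocked. -/
def BlockedTrail {V : Type*} (E : V → V → Prop) (S : Set V) (p : List V) : Prop :=
  ∃ l x y z r, p = l ++ x :: y :: z :: r ∧ BlockedTriple E S x y z

/-- d-separation: every trail between `A` and `B` is blocked by `S`. -/
def DSep {V : Type*} (E : V → V → Prop) (A B S : Set V) : Prop :=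
  ∀ a ∈ A, ∀ b ∈ B, ∀ p : List V, IsTrail E a b p → BlockedTrail E S p

/-- Markov equivalence: the same d-separations among disjoint sets. -/
def MarkovEquiv {V : Type*} (E₁ E₂ : V → V → Prop) : Prop :=
  ∀ A B S : Set V, Disjoint A B → Disjoint A S → Disjoint B S →
    (DSep E₁ A B S ↔ DSep E₂ A B S)

/-- The ancestral closure of `W`: all vertices with a directed path into `W`. -/
def AncSet {V : Type*} (E : V → V → Prop) (W : Set V) : Set V :=
  {v | ∃ w ∈ W, Reaches E v w}

/-- The subgraph induced on a vertex set. -/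
def InducedE {V : Type*} (E : V → V → Prop) (W : Set V) (a b : V) : Prop :=
  E a b ∧ a ∈ W ∧ b ∈ W

/-- Moral graph adjacency: skeleton edges plus marriages of common parents. -/
def Moral {V : Type*} (E : V → V → Prop) (a b : V) : Prop :=
  a ≠ b ∧ (E a b ∨ E b a ∨ ∃ c, E a c ∧ E b c)

/-- `p` is a path from `a` to `b` in the undirected graph `G`. -/
def UPath {V : Type*} (G : V → V → Prop) (a b : V) (p : List V) : Prop :=
  p.Chain' G ∧ p.head? = some a ∧ p.getLast? = some b ∧ p.Nodup

/-- Separation in an undirected graph: every path from `A` to `B` meets `S`. -/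
def USep {V : Type*} (G : V → V → Prop) (A B S : Set V) : Prop :=
  ∀ a ∈ A, ∀ b ∈ B, ∀ p : List V, UPath G a b p → ∃ s ∈ S, s ∈ p

/-! Every vertex of a walk that is open (no consecutive triple blocked by `S`) is an ancestor of
`S` or of one of its endpoints, so an open trail from `A` to `B` lies in `N = An(A ∪ B ∪ S)`,
and deleting its colliders leaves a moral path that avoids `S`.

Conversely, replace each marriage `x - z` of a moral path avoiding `S` by `x → c ← z`. A
collider that is not an ancestor of `S` still lies in `N`, so it descends into `A` or `B` along
vertices outside `S`, and the walk is rerouted down that directed path. This gives an open walk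
from `A` to `B`; cutting out its loops gives an open trail, acyclicity keeping each new junction
open. -/

open List

theorem List.two_le_length_of_head?_of_getLast? {α : Type*} {l : List α} {a b : α}
    (ha : l.head? = some a) (hb : l.getLast? = some b) (hab : a ≠ b) : 2 ≤ l.length := by
  match l with
  | [] => simp at ha
  | [x] => simp_all
  | _ :: _ :: _ => simp

theorem List.exists_eq_append_cons_append_cons_of_not_nodup {α : Type*} {l : List α}
    (h : ¬ l.Nodup) : ∃ s v m r, l = s ++ v :: (m ++ v :: r) := by
  obtain ⟨v, hv⟩ : ∃ v, [v, v] <+ l := by simpa [nodup_iff_sublist] using h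
  obtain ⟨r₁, r₂, rfl, h₁, h₂⟩ := cons_sublist_iff.1 hv
  obtain ⟨s, m, rfl⟩ := append_of_mem h₁
  obtain ⟨m', r, rfl⟩ := append_of_mem (singleton_sublist.1 h₂)
  exact ⟨s, v, m ++ m', r, by simp⟩

section
variable {V : Type*} {E : V → V → Prop} {S : Set V} {a b x y : V}

theorem IsAcyclicD.irrefl (hE : IsAcyclicD E) (x : V) : ¬ E x x :=
  fun h => hE x x h .refl

theorem IsAcyclicD.asymm (hE : IsAcyclicD E) (h : E x y) : ¬ E y x :=
  fun h' => hE x y h (.single h')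

theorem subset_ancSet (W : Set V) : W ⊆ AncSet E W :=
  fun w hw => ⟨w, hw, .refl⟩

theorem ancSet_mono {W W' : Set V} (h : W ⊆ W') : AncSet E W ⊆ AncSet E W' :=
  fun _ ⟨w, hw, hvw⟩ => ⟨w, h hw, hvw⟩

theorem mem_ancSet_of_reaches {W : Set V} (hxy : Reaches E x y)
    (hy : y ∈ AncSet E W) : x ∈ AncSet E W :=
  let ⟨w, hw, hyw⟩ := hy
  ⟨w, hw, Relation.ReflTransGen.trans hxy hyw⟩

theorem mem_ancSet_of_edge {W : Set V} (hxy : E x y) (hy : y ∈ AncSet E W) :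
    x ∈ AncSet E W :=
  mem_ancSet_of_reaches (.single hxy) hy

theorem moral_of_skel {W : Set V} (hne : x ≠ y) (h : Skel E x y) (hx : x ∈ W)
    (hy : y ∈ W) : Moral (InducedE E W) x y :=
  ⟨hne, h.elim (fun h => Or.inl ⟨h, hx, hy⟩) fun h => Or.inr (Or.inl ⟨h, hy, hx⟩)⟩

theorem BlockedTriple.symm {z : V} (h : BlockedTriple E S x y z) :
    BlockedTriple E S z y x := by
  unfold BlockedTriple at *
  tauto

theorem blockedTriple_iff_of_collider {z : V} (h : E x y ∧ E z y) :
    BlockedTriple E S x y z ↔ y ∉ AncSet E S := by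
  simp [BlockedTriple, AncSet, h]

theorem blockedTriple_iff_of_not_collider {z : V} (h : ¬ (E x y ∧ E z y)) :
    BlockedTriple E S x y z ↔ y ∈ S := by
  simp only [BlockedTriple, h, false_and, not_false_eq_true, true_and, false_or]

theorem not_blockedTriple_of_mem_ancSet {z : V} (hy : y ∈ AncSet E S) (hyS : y ∉ S) :
    ¬ BlockedTriple E S x y z := by
  by_cases h : E x y ∧ E z y
  · simpa [blockedTriple_iff_of_collider h] using hy
  · simpa [blockedTriple_iff_of_not_collider h] using hyS

theorem BlockedTrail.mono {p q : List V} (h : BlockedTrail E S q) (hqp : q <:+: p) :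
    BlockedTrail E S p := by
  obtain ⟨l, x, y, z, r, rfl, hb⟩ := h
  obtain ⟨s, t, rfl⟩ := hqp
  exact ⟨s ++ l, x, y, z, r ++ t, by simp, hb⟩

theorem BlockedTrail.reverse {p : List V} (h : BlockedTrail E S p) :
    BlockedTrail E S p.reverse := by
  obtain ⟨l, x, y, z, r, rfl, hb⟩ := h
  exact ⟨r.reverse, z, y, x, l.reverse, by simp, hb.symm⟩

theorem not_blockedTrail_of_length_lt {p : List V} (hp : p.length < 3) :
    ¬ BlockedTrail E S p := by
  rintro ⟨l, x, y, z, r, rfl, -⟩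
  simp at hp
  omega

theorem blockedTrail_cons_iff {p : List V} :
    BlockedTrail E S (x :: p) ↔
      (∃ y z r, p = y :: z :: r ∧ BlockedTriple E S x y z) ∨ BlockedTrail E S p := by
  constructor
  · rintro ⟨_ | ⟨w, l⟩, a, b, c, r, h, hb⟩ <;>
      simp only [nil_append, cons_append, cons.injEq] at h
    · obtain ⟨rfl, rfl⟩ := h
      exact Or.inl ⟨b, c, r, rfl, hb⟩
    · exact Or.inr ⟨l, a, b, c, r, h.2, hb⟩
  · rintro (⟨y, z, r, rfl, hb⟩ | ⟨l, a, b, c, r, rfl, hb⟩)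
    · exact ⟨[], x, y, z, r, rfl, hb⟩
    · exact ⟨x :: l, a, b, c, r, rfl, hb⟩

theorem not_blockedTrail_append {l r : List V} (hl : ¬ BlockedTrail E S (l ++ [x]))
    (hr : ¬ BlockedTrail E S (x :: r))
    (hx : ∀ u ∈ l.getLast?, ∀ y ∈ r.head?, ¬ BlockedTriple E S u x y) :
    ¬ BlockedTrail E S (l ++ x :: r) := by
  induction l with
  | nil => exact hr
  | cons w l ih =>
    rw [cons_append, blockedTrail_cons_iff, not_or]
    refine ⟨?_, ih (fun h => hl (h.mono (suffix_cons w _).isInfix)) fun u hu => hx u ?_⟩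
    · rintro ⟨y, z, r', h, hb⟩
      rcases l with _ | ⟨y', _ | ⟨z', l⟩⟩ <;>
        simp only [nil_append, cons_append, cons.injEq] at h
      · obtain ⟨rfl, rfl, rfl⟩ := h
        exact hx w rfl z rfl hb
      · obtain ⟨rfl, rfl, -⟩ := h
        exact hl ⟨[], w, _, _, [], rfl, hb⟩
      · obtain ⟨rfl, rfl, -⟩ := h
        exact hl ⟨[], w, _, _, l ++ [x], rfl, hb⟩
    · rcases l with _ | ⟨y', l⟩
      · simp at hu
      · rwa [getLast?_cons_cons]
/-- A d-connecting walk: unlike a trail it may revisit vertices. -/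
def IsOpenWalk (E : V → V → Prop) (S : Set V) (a b : V) (p : List V) : Prop :=
  p.IsChain (Skel E) ∧ p.head? = some a ∧ p.getLast? = some b ∧ ¬ BlockedTrail E S p

def DConnected (E : V → V → Prop) (S : Set V) (a b : V) : Prop :=
  ∃ p, IsOpenWalk E S a b p

namespace IsOpenWalk
variable {p q : List V}

theorem reverse (hp : IsOpenWalk E S a b p) : IsOpenWalk E S b a p.reverse :=
  ⟨isChain_reverse.2 (hp.1.imp fun _ _ h => Or.symm h), by simpa using hp.2.2.1,
    by simpa using hp.2.1, fun h => hp.2.2.2 (by simpa using h.reverse)⟩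

theorem suffix {l r : List V} (hp : IsOpenWalk E S a b (l ++ x :: r)) :
    IsOpenWalk E S x b (x :: r) :=
  ⟨hp.1.suffix (suffix_append _ _), rfl, by rw [← getLast?_append_cons l]; exact hp.2.2.1,
    fun h => hp.2.2.2 (h.mono (suffix_append _ _).isInfix)⟩

theorem tail (hp : IsOpenWalk E S x b (x :: y :: q)) : IsOpenWalk E S y b (y :: q) :=
  suffix (l := [x]) hp

theorem cons (hp : IsOpenWalk E S y b (y :: q)) (hxy : Skel E x y)
    (hxyz : ∀ z ∈ q.head?, ¬ BlockedTriple E S x y z) : IsOpenWalk E S x b (x :: y :: q) :=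
  ⟨hp.1.cons_cons hxy, rfl, by rw [getLast?_cons_cons]; exact hp.2.2.1,
    not_blockedTrail_append (l := [x]) (not_blockedTrail_of_length_lt (by simp)) hp.2.2.2
      (by simpa using hxyz)⟩

theorem cons_child (hE : IsAcyclicD E) (hp : IsOpenWalk E S y b (y :: q)) (hyx : E y x)
    (hy : y ∉ S) : IsOpenWalk E S x b (x :: y :: q) :=
  hp.cons (Or.inr hyx) fun _ _ =>
    (blockedTriple_iff_of_not_collider fun h => hE.asymm hyx h.1).not.2 hy

theorem mem_ancSet_of_collider {u v w : V} {l r : List V}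
    (hp : IsOpenWalk E S a b (l ++ u :: v :: w :: r)) (hu : E u v) (hw : E w v) :
    v ∈ AncSet E S :=
  not_not.1 fun hv =>
    hp.2.2.2 ⟨l, u, v, w, r, rfl, (blockedTriple_iff_of_collider ⟨hu, hw⟩).2 hv⟩

/-- Leaving a non-ancestor of `S` forwards, an open walk can only continue forwards. -/
theorem mem_ancSet_or_reaches (hp : IsOpenWalk E S x b (x :: y :: q)) (hxy : E x y) :
    x ∈ AncSet E S ∨ Reaches E y b := by
  induction q generalizing x y with
  | nil =>
    obtain rfl : y = b := by simpa using hp.2.2.1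
    exact Or.inr .refl
  | cons z q ih =>
    by_cases hyz : E y z
    · rcases ih hp.tail hyz with h | h
      · exact Or.inl (mem_ancSet_of_edge hxy h)
      · exact Or.inr (.head hyz h)
    · have hzy : E z y := (isChain_cons_cons.1 hp.tail.1).1.resolve_left hyz
      exact Or.inl (mem_ancSet_of_edge hxy (mem_ancSet_of_collider (l := []) hp hxy hzy))

theorem mem_ancSet (hp : IsOpenWalk E S a b p) {v : V} (hv : v ∈ p) :
    v ∈ AncSet E (S ∪ {a, b}) := by
  have hS : AncSet E S ⊆ AncSet E (S ∪ {a, b}) := ancSet_mono Set.subset_union_left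
  have ha : a ∈ AncSet E (S ∪ {a, b}) := subset_ancSet _ (by simp)
  have hb : b ∈ AncSet E (S ∪ {a, b}) := subset_ancSet _ (by simp)
  obtain ⟨l, r, rfl⟩ := append_of_mem hv
  have hsuf : IsOpenWalk E S v b (v :: r) := hp.suffix
  have hpre : IsOpenWalk E S v a (v :: l.reverse) := by
    have h := hp.reverse
    rw [reverse_append, reverse_cons, append_assoc, singleton_append] at h
    exact h.suffix
  rcases r with _ | ⟨y, r⟩
  · obtain rfl : v = b := by simpa using hsuf.2.2.1
    exact hb
  rcases l.eq_nil_or_concat with rfl | ⟨l, u, rfl⟩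
  · obtain rfl : v = a := by simpa using hpre.2.2.1
    exact ha
  simp only [concat_eq_append, reverse_append, reverse_cons, reverse_nil, nil_append,
    singleton_append] at hpre
  by_cases hvy : E v y
  · exact (hsuf.mem_ancSet_or_reaches hvy).elim (hS ·) (mem_ancSet_of_edge hvy <|
      mem_ancSet_of_reaches · hb)
  by_cases hvu : E v u
  · exact (hpre.mem_ancSet_or_reaches hvu).elim (hS ·) (mem_ancSet_of_edge hvu <|
      mem_ancSet_of_reaches · ha)
  have huv : E u v := (isChain_cons_cons.1 hpre.1).1.resolve_left hvu
  have hyv : E y v := (isChain_cons_cons.1 hsuf.1).1.resolve_left hvy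
  exact hS (mem_ancSet_of_collider (by simpa using hp) huv hyv)

end IsOpenWalk

/-- At `v` a collider outside the ancestors of `S` would make the loop a directed cycle, and a
vertex of `S` must be a collider on both sides of the loop. -/
theorem not_blockedTriple_of_loop (hE : IsAcyclicD E) {u v : V} {m : List V}
    (hc : (v :: (m ++ [v])).IsChain (Skel E))
    (ho : ¬ BlockedTrail E S (u :: v :: (m ++ [v, y]))) : ¬ BlockedTriple E S u v y := by
  rcases m with _ | ⟨w, m⟩
  · exact ((isChain_pair.1 hc).elim (hE.irrefl v) (hE.irrefl v)).elim
  obtain ⟨m', w', hm⟩ : ∃ m' w', w :: m = m' ++ [w'] := by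
    simpa [eq_comm] using (w :: m).eq_nil_or_concat
  have h₁ : ¬ BlockedTriple E S u v w := fun h => ho ⟨[], u, v, w, _, rfl, h⟩
  have h₂ : ¬ BlockedTriple E S w' v y := fun h =>
    ho ⟨u :: v :: m', w', v, y, [], by rw [hm]; simp, h⟩
  intro hb
  by_cases hcol : E u v ∧ E y v
  · have hv : v ∉ AncSet E S := (blockedTriple_iff_of_collider hcol).1 hb
    have hvw : E v w := (isChain_cons_cons.1 hc).1.resolve_right fun hwv =>
      h₁ ((blockedTriple_iff_of_collider ⟨hcol.1, hwv⟩).2 hv)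
    have hloop : IsOpenWalk E S v v (v :: w :: (m ++ [v])) :=
      ⟨hc, rfl, getLast?_eq_some_iff.2 ⟨v :: w :: m, by simp⟩,
        fun h => ho (h.mono ⟨[u], [y], by simp⟩)⟩
    exact (hloop.mem_ancSet_or_reaches hvw).elim hv (hE v w hvw)
  · have hv : v ∈ S := (blockedTriple_iff_of_not_collider hcol).1 hb
    have collider {a c : V} (h : ¬ BlockedTriple E S a v c) : E a v ∧ E c v :=
      not_not.1 fun hac => h ((blockedTriple_iff_of_not_collider hac).2 hv)
    exact hcol ⟨(collider h₁).1, (collider h₂).2⟩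

namespace IsOpenWalk

theorem shortcut (hE : IsAcyclicD E) {l m r : List V} {v : V}
    (hp : IsOpenWalk E S a b (l ++ v :: (m ++ v :: r))) : IsOpenWalk E S a b (l ++ v :: r) := by
  obtain ⟨hc, ha, hb, ho⟩ := hp
  rw [isChain_append] at hc
  refine ⟨isChain_append.2 ⟨hc.1, hc.2.1.suffix ⟨v :: m, by simp⟩, hc.2.2⟩,
    by simpa using ha, ?_,
    not_blockedTrail_append (fun h => ho (h.mono ⟨[], m ++ v :: r, by simp⟩))
      (fun h => ho (h.mono ⟨l ++ v :: m, [], by simp⟩)) ?_⟩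
  · rw [getLast?_append_cons] at hb ⊢
    rwa [← cons_append, getLast?_append_cons] at hb
  · intro u hu y hy
    obtain ⟨l', rfl⟩ := getLast?_eq_some_iff.1 hu
    obtain ⟨r', rfl⟩ := head?_eq_some_iff.1 hy
    exact not_blockedTriple_of_loop (m := m) hE (hc.2.1.prefix ⟨y :: r', by simp⟩)
      fun h => ho (h.mono ⟨l', r', by simp⟩)

theorem exists_trail (hE : IsAcyclicD E) (hab : a ≠ b) {p : List V}
    (hp : IsOpenWalk E S a b p) : ∃ q, IsTrail E a b q ∧ ¬ BlockedTrail E S q := by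
  by_cases hnd : p.Nodup
  · exact ⟨p, ⟨hp.1, hp.2.1, hp.2.2.1, hnd,
      two_le_length_of_head?_of_getLast? hp.2.1 hp.2.2.1 hab⟩, hp.2.2.2⟩
  obtain ⟨l, v, m, r, hlp⟩ := exists_eq_append_cons_append_cons_of_not_nodup hnd
  exact exists_trail hE hab ((hlp ▸ hp).shortcut hE)
termination_by p.length
decreasing_by rw [hlp]; simp

end IsOpenWalk

namespace DConnected

theorem symm (h : DConnected E S a b) : DConnected E S b a :=
  let ⟨p, hp⟩ := h
  ⟨p.reverse, hp.reverse⟩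

theorem of_skel (h : Skel E x y) : DConnected E S x y :=
  ⟨[x, y], isChain_pair.2 h, rfl, rfl, not_blockedTrail_of_length_lt (by simp)⟩

theorem of_child (hE : IsAcyclicD E) (h : DConnected E S y b) (hyx : E y x) (hy : y ∉ S) :
    DConnected E S x b := by
  obtain ⟨p, hp⟩ := h
  obtain ⟨q, rfl⟩ := head?_eq_some_iff.1 hp.2.1
  exact ⟨_, hp.cons_child hE hyx hy⟩

theorem of_reaches (hE : IsAcyclicD E) (h : DConnected E S y b) (hy : y ∉ AncSet E S) {w : V}
    (hyw : Reaches E y w) : DConnected E S w b := by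
  induction hyw with
  | refl => exact h
  | tail hyz hzw ih =>
    exact ih.of_child hE hzw fun hz => hy (mem_ancSet_of_reaches hyz (subset_ancSet S hz))

end DConnected

variable {A B : Set V}

/-- A vertex outside the ancestors of `S` descends into `A` or `B`; the walk is rerouted there. -/
theorem exists_dConnected_of_not_mem_ancSet (hE : IsAcyclicD E)
    (hyN : y ∈ AncSet E (A ∪ B ∪ S)) (hy : y ∉ AncSet E S) (hyb : DConnected E S y b)
    (hb : b ∈ B) (hxy : Skel E x y) :
    (∃ a ∈ A, ∃ b ∈ B, DConnected E S a b) ∨ ∃ b ∈ B, DConnected E S x b := by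
  obtain ⟨w, (hw | hw) | hw, hyw⟩ := hyN
  · exact Or.inl ⟨w, hw, b, hb, hyb.of_reaches hE hy hyw⟩
  · exact Or.inr ⟨w, hw, ((DConnected.of_skel hxy).symm.of_reaches hE hy hyw).symm⟩
  · exact absurd ⟨w, hw, hyw⟩ hy

theorem exists_dConnected_of_moral_adj (hE : IsAcyclicD E)
    (hxy : Moral (InducedE E (AncSet E (A ∪ B ∪ S))) x y) (hy : y ∉ S)
    (hyb : DConnected E S y b) (hb : b ∈ B) :
    (∃ a ∈ A, ∃ b ∈ B, DConnected E S a b) ∨ ∃ b ∈ B, DConnected E S x b := by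
  obtain ⟨p, hp⟩ := hyb
  obtain ⟨q, rfl⟩ := head?_eq_some_iff.1 hp.2.1
  have hskel (hxy : Skel E x y) (hyN : y ∈ AncSet E (A ∪ B ∪ S)) :
      (∃ a ∈ A, ∃ b ∈ B, DConnected E S a b) ∨ ∃ b ∈ B, DConnected E S x b := by
    by_cases hyS : y ∈ AncSet E S
    · exact Or.inr ⟨b, hb, _, hp.cons hxy fun _ _ => not_blockedTriple_of_mem_ancSet hyS hy⟩
    · exact exists_dConnected_of_not_mem_ancSet hE hyN hyS ⟨_, hp⟩ hb hxy
  obtain ⟨-, ⟨hxy, -, hyN⟩ | ⟨hyx, hyN, -⟩ | ⟨c, ⟨hxc, -, hcN⟩, hyc, -⟩⟩ := hxy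
  · exact hskel (Or.inl hxy) hyN
  · exact hskel (Or.inr hyx) hyN
  have hcp : IsOpenWalk E S c b (c :: y :: q) := hp.cons_child hE hyc hy
  by_cases hcS : c ∈ AncSet E S
  · refine Or.inr ⟨b, hb, _, hcp.cons (Or.inl hxc) fun z hz => ?_⟩
    obtain rfl : y = z := Option.some_inj.1 hz
    exact (blockedTriple_iff_of_collider ⟨hxc, hyc⟩).not.2 (not_not.2 hcS)
  · exact exists_dConnected_of_not_mem_ancSet hE hcN hcS ⟨_, hcp⟩ hb (Or.inl hxc)

theorem exists_dConnected_of_moral_chain (hE : IsAcyclicD E) (hb : b ∈ B) :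
    ∀ {x : V} {q : List V}, (x :: q).IsChain (Moral (InducedE E (AncSet E (A ∪ B ∪ S)))) →
      (x :: q).getLast? = some b → (∀ v ∈ q, v ∉ S) →
      (∃ a ∈ A, ∃ b ∈ B, DConnected E S a b) ∨ ∃ b ∈ B, DConnected E S x b
  | x, [], _, hx, _ =>
    Or.inr ⟨b, hb, [x], .singleton x, rfl, hx, not_blockedTrail_of_length_lt (by simp)⟩
  | x, y :: q, hc, hl, hS => by
    rw [isChain_cons_cons] at hc
    rw [getLast?_cons_cons] at hl
    rcases exists_dConnected_of_moral_chain hE hb hc.2 hl fun v hv => hS v (mem_cons_of_mem y hv)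
      with h | ⟨b', hb', hy⟩
    · exact Or.inl h
    · exact exists_dConnected_of_moral_adj hE hc.1 (hS y mem_cons_self) hy hb'

/-- The two neighbours of a collider are married, so the colliders can be dropped. -/
theorem IsOpenWalk.exists_moral_sublist (hE : IsAcyclicD E) {W : Set V} :
    ∀ {x t : V} {q : List V}, IsOpenWalk E S x t (x :: q) → (x :: q).Nodup →
      (∀ v ∈ x :: q, v ∈ W) → t ∉ S →
      ∃ m, m <+ q ∧ (x :: m).IsChain (Moral (InducedE E W)) ∧ (x :: m).getLast? = some t ∧
        ∀ v ∈ m, v ∉ S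
  | x, t, [], hp, _, _, _ => ⟨[], .slnil, .singleton x, hp.2.2.1, by simp⟩
  | x, t, [y], hp, hnd, hW, ht => by
    obtain rfl : y = t := by simpa using hp.2.2.1
    exact ⟨[y], .refl _, isChain_pair.2 (moral_of_skel (by simpa using hnd)
      (isChain_pair.1 hp.1) (hW x (by simp)) (hW y (by simp))), rfl, by simpa using ht⟩
  | x, t, y :: z :: r, hp, hnd, hW, ht => by
    have hx : x ∉ y :: z :: r := (nodup_cons.1 hnd).1
    by_cases hcol : E x y ∧ E z y
    · have hz : z ∉ S := by
        rcases r with _ | ⟨w, r⟩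
        · obtain rfl : z = t := by simpa using hp.2.2.1
          exact ht
        · exact fun hz => hp.tail.2.2.2 ⟨[], y, z, w, r, rfl,
            (blockedTriple_iff_of_not_collider fun h => hE.asymm hcol.2 h.1).2 hz⟩
      obtain ⟨m, hm, hc, hl, hS⟩ := exists_moral_sublist hE hp.tail.tail
        (hnd.sublist (by simp)) (fun v hv => hW v (by simp_all)) ht
      have hxz : Moral (InducedE E W) x z := ⟨by rintro rfl; simp at hx,
        Or.inr (Or.inr ⟨y, ⟨hcol.1, hW x (by simp), hW y (by simp)⟩,
          hcol.2, hW z (by simp), hW y (by simp)⟩)⟩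
      exact ⟨z :: m, (hm.cons_cons z).cons y, hc.cons_cons hxz, by rwa [getLast?_cons_cons],
        forall_mem_cons.2 ⟨hz, hS⟩⟩
    · have hy : y ∉ S := fun hy =>
        hp.2.2.2 ⟨[], x, y, z, r, rfl, (blockedTriple_iff_of_not_collider hcol).2 hy⟩
      obtain ⟨m, hm, hc, hl, hS⟩ := exists_moral_sublist hE hp.tail
        (hnd.sublist (by simp)) (fun v hv => hW v (by simp_all)) ht
      have hxy : Moral (InducedE E W) x y := moral_of_skel (by rintro rfl; simp at hx)
        (isChain_cons_cons.1 hp.1).1 (hW x (by simp)) (hW y (by simp))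
      exact ⟨y :: m, hm.cons_cons y, hc.cons_cons hxy, by rwa [getLast?_cons_cons],
        forall_mem_cons.2 ⟨hy, hS⟩⟩

end

theorem dsep_iff_moral_separation_general
    {V : Type*}
    (E : V → V → Prop) (hE : IsAcyclicD E) (A B S : Set V)
    (hAB : Disjoint A B) (hAS : Disjoint A S) (hBS : Disjoint B S) :
    DSep E A B S ↔ USep (Moral (InducedE E (AncSet E (A ∪ B ∪ S)))) A B S := by
  constructor
  · rintro hD a ha b hb m ⟨hc, hm, hl, -⟩
    by_contra! hS
    obtain ⟨q, rfl⟩ := head?_eq_some_iff.1 hm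
    obtain ⟨a', ha', b', hb', p, hp⟩ : ∃ a ∈ A, ∃ b ∈ B, DConnected E S a b := by
      rcases exists_dConnected_of_moral_chain hE hb hc hl fun v hv hvS =>
        hS v hvS (mem_cons_of_mem a hv) with h | ⟨b', hb', h⟩
      · exact h
      · exact ⟨a, ha, b', hb', h⟩
    obtain ⟨q, hq, hqS⟩ := hp.exists_trail hE (hAB.ne_of_mem ha' hb')
    exact hqS (hD a' ha' b' hb' q hq)
  · rintro hU a ha b hb p ⟨hc, hp, hl, hnd, -⟩
    by_contra hpS
    have hwalk : IsOpenWalk E S a b p := ⟨hc, hp, hl, hpS⟩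
    obtain ⟨q, rfl⟩ := head?_eq_some_iff.1 hp
    have hN : S ∪ {a, b} ⊆ A ∪ B ∪ S := by rintro v (hv | rfl | rfl) <;> simp [*]
    obtain ⟨m, hm, hmc, hml, hmS⟩ := hwalk.exists_moral_sublist hE hnd
      (fun v hv => ancSet_mono hN (hwalk.mem_ancSet hv)) (Set.disjoint_left.1 hBS hb)
    obtain ⟨s, hs, hsm⟩ :=
      hU a ha b hb (a :: m) ⟨hmc, rfl, hml, hnd.sublist (hm.cons_cons a)⟩
    rcases mem_cons.1 hsm with rfl | hsm
    · exact Set.disjoint_left.1 hAS ha hs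
    · exact hmS s hsm hs

/-- d-separation of `A` and `B` by `S` holds iff `A` and `B` are separated by `S` in the
moral graph of the ancestral subgraph generated by `A ∪ B ∪ S`. -/
theorem dsep_iff_moral_separation
    {V : Type*} [Fintype V] [DecidableEq V]
    (E : V → V → Prop) (hE : IsAcyclicD E) (A B S : Set V)
    (hAB : Disjoint A B) (hAS : Disjoint A S) (hBS : Disjoint B S) :
    DSep E A B S ↔ USep (Moral (InducedE E (AncSet E (A ∪ B ∪ S)))) A B S :=
  dsep_iff_moral_separation_general E hE A B S hAB hAS hBS
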